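/- arXiv:2304.07573 — 2 statements merged into one kernel-verified Lean document; each statement's English description precedes it below -/
import Mathlib

section
/- With the same masking setup (y_i = g_i + Σ_{j>i} s_{ij} − Σ_{j<i} s_{ji}, all g's and s's independent and the s's uniform on F^p), for E ≥ 3 clients and any single client index t, the collection of masked values (y_i)_{i ≠ t} is independent of g_t given Σ_i g_i. Equivalently, I(g_t ; (y_i)_{i≠t} | Σ_i g_i) = 0 fails to reveal any information about g_t beyond the sum. -/
/-! The adversary's view `((g_t, (y_i)_{i ≠ t}), ∑ i, g_i)` is the image of the uniform tuple
`(g, s)` under an additive map, and that map is surjective as soon as some client `u ≠ t` exists: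
`g_t` and `g_u` fix the first and last components, and then the masks `s_{it}` on the pairs
through `t` adjust each `y_i` independently. The image of a uniform variable under a surjective
homomorphism is uniform, so the view is uniform on a product, each marginal entering
`I(X ; Y | Z)` is uniform too, and the mutual information is a combination of logarithms of
cardinalities that cancels. -/

open Finset

noncomputable def prEq {Ω : Type*} [Fintype Ω] {α : Type*} [DecidableEq α]
    (μ : Ω → ℝ) (X : Ω → α) (a : α) : ℝ :=
  ∑ ω, if X ω = a then μ ω else 0

open scoped Classical in
noncomputable def prEvent {Ω : Type*} [Fintype Ω] (μ : Ω → ℝ) (s : Ω → Prop) : ℝ :=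
  ∑ ω, if s ω then μ ω else 0

noncomputable def entro {Ω α : Type*} [Fintype Ω] [Fintype α] [DecidableEq α]
    (μ : Ω → ℝ) (X : Ω → α) : ℝ :=
  ∑ a, Real.negMulLog (prEq μ X a)

noncomputable def condEntro {Ω α β : Type*} [Fintype Ω] [Fintype α] [DecidableEq α]
    [Fintype β] [DecidableEq β] (μ : Ω → ℝ) (X : Ω → α) (Y : Ω → β) : ℝ :=
  entro μ (fun ω => (X ω, Y ω)) - entro μ Y

noncomputable def mutInfo {Ω α β : Type*} [Fintype Ω] [Fintype α] [DecidableEq α]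
    [Fintype β] [DecidableEq β] (μ : Ω → ℝ) (X : Ω → α) (Y : Ω → β) : ℝ :=
  entro μ X + entro μ Y - entro μ (fun ω => (X ω, Y ω))

noncomputable def condMutInfo {Ω α β γ : Type*} [Fintype Ω] [Fintype α] [DecidableEq α]
    [Fintype β] [DecidableEq β] [Fintype γ] [DecidableEq γ]
    (μ : Ω → ℝ) (X : Ω → α) (Y : Ω → β) (Z : Ω → γ) : ℝ :=
  condEntro μ X Z + condEntro μ Y Z - condEntro μ (fun ω => (X ω, Y ω)) Z

def IsPMF {Ω : Type*} [Fintype Ω] (μ : Ω → ℝ) : Prop :=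
  (∀ ω, 0 ≤ μ ω) ∧ ∑ ω, μ ω = 1

def IndepRV {Ω α β : Type*} [Fintype Ω] [DecidableEq α] [DecidableEq β]
    (μ : Ω → ℝ) (X : Ω → α) (Y : Ω → β) : Prop :=
  ∀ a b, prEq μ (fun ω => (X ω, Y ω)) (a, b) = prEq μ X a * prEq μ Y b

def IsUniformRV {Ω A : Type*} [Fintype Ω] [Fintype A] [DecidableEq A]
    (μ : Ω → ℝ) (W : Ω → A) : Prop :=
  ∀ a, prEq μ W a = 1 / (Fintype.card A : ℝ)

lemma prEq_comp {Ω A B : Type*} [Fintype Ω] [Fintype A] [DecidableEq A] [DecidableEq B]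
    (μ : Ω → ℝ) (W : Ω → A) (f : A → B) (b : B) :
    prEq μ (fun ω => f (W ω)) b = ∑ a with f a = b, prEq μ W a := by
  unfold prEq
  rw [Finset.sum_comm]
  refine Finset.sum_congr rfl fun ω _ => ?_
  rw [Finset.sum_ite_eq]
  simp

lemma IsUniformRV.comp_addMonoidHom {Ω A B : Type*} [Fintype Ω] [Fintype A] [DecidableEq A]
    [Fintype B] [DecidableEq B] [AddCommGroup A] [AddCommGroup B]
    {μ : Ω → ℝ} {W : Ω → A} (hW : IsUniformRV μ W) (f : A →+ B) (hf : Function.Surjective f) :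
    IsUniformRV μ (fun ω => f (W ω)) := by
  intro b
  have hfiber : ∀ b', #{a | f a = b'} = #{a | f a = b} := fun b' =>
    AddMonoidHom.card_fiber_eq_of_mem_range f (hf b') (hf b)
  have hcard : Fintype.card A = Fintype.card B * #{a | f a = b} := by
    rw [← Finset.card_univ, Finset.card_eq_sum_card_fiberwise (f := f) (t := univ)
      (fun _ _ => mem_univ _)]
    simp [hfiber]
  have hfiber_pos : 0 < #{a | f a = b} := Nat.pos_of_mul_pos_left (hcard ▸ Fintype.card_pos)
  rw [prEq_comp, Finset.sum_congr rfl fun a _ => hW a, Finset.sum_const, nsmul_eq_mul, hcard]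
  push_cast
  field_simp

lemma entro_of_isUniformRV {Ω A : Type*} [Fintype Ω] [Fintype A] [DecidableEq A]
    {μ : Ω → ℝ} {W : Ω → A} (hW : IsUniformRV μ W) :
    entro μ W = Real.log (Fintype.card A) := by
  rcases isEmpty_or_nonempty A with hA | hA
  · simp [entro]
  have hA_pos : (0 : ℝ) < Fintype.card A := by exact_mod_cast Fintype.card_pos
  rw [entro, Finset.sum_congr rfl fun a _ => by rw [hW a], Finset.sum_const, Finset.card_univ,
    nsmul_eq_mul, Real.negMulLog, one_div, Real.log_inv]
  field_simp

lemma condMutInfo_eq_zero_of_isUniformRV {Ω α β γ : Type*} [Fintype Ω]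
    [AddCommGroup α] [Fintype α] [DecidableEq α] [AddCommGroup β] [Fintype β] [DecidableEq β]
    [AddCommGroup γ] [Fintype γ] [DecidableEq γ]
    {μ : Ω → ℝ} {X : Ω → α} {Y : Ω → β} {Z : Ω → γ}
    (h : IsUniformRV μ (fun ω => ((X ω, Y ω), Z ω))) :
    condMutInfo μ X Y Z = 0 := by
  have hXZ : IsUniformRV μ (fun ω => (X ω, Z ω)) :=
    h.comp_addMonoidHom ((AddMonoidHom.fst α β).prodMap (AddMonoidHom.id γ))
      (fun p => ⟨((p.1, 0), p.2), rfl⟩)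
  have hYZ : IsUniformRV μ (fun ω => (Y ω, Z ω)) :=
    h.comp_addMonoidHom ((AddMonoidHom.snd α β).prodMap (AddMonoidHom.id γ))
      (fun p => ⟨((0, p.1), p.2), rfl⟩)
  have hZ : IsUniformRV μ Z :=
    h.comp_addMonoidHom (AddMonoidHom.snd (α × β) γ) (fun c => ⟨(0, c), rfl⟩)
  have hα : (Fintype.card α : ℝ) ≠ 0 := by exact_mod_cast Fintype.card_ne_zero
  have hβ : (Fintype.card β : ℝ) ≠ 0 := by exact_mod_cast Fintype.card_ne_zero
  have hγ : (Fintype.card γ : ℝ) ≠ 0 := by exact_mod_cast Fintype.card_ne_zero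
  simp only [condMutInfo, condEntro, entro_of_isUniformRV h, entro_of_isUniformRV hXZ,
    entro_of_isUniformRV hYZ, entro_of_isUniformRV hZ, Fintype.card_prod, Nat.cast_mul,
    Real.log_mul hα hγ, Real.log_mul hβ hγ, Real.log_mul (mul_ne_zero hα hβ) hγ,
    Real.log_mul hα hβ]
  ring

section Masking

abbrev MaskIdx (E : ℕ) := {q : Fin E × Fin E // q.1 < q.2}

variable {V : Type*} [AddCommGroup V] {E : ℕ}

def maskNet : (MaskIdx E → V) →+ (Fin E → V) :=
  AddMonoidHom.mk' (fun s i => ∑ q with q.1.1 = i, s q - ∑ q with q.1.2 = i, s q) (by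
    intro s s'
    funext i
    simp only [Pi.add_apply, Finset.sum_add_distrib]
    abel)

lemma maskNet_single (q : MaskIdx E) (v : V) (i : Fin E) :
    maskNet (Pi.single q v) i = (if q.1.1 = i then v else 0) - (if q.1.2 = i then v else 0) := by
  simp [maskNet, Finset.sum_pi_single']

lemma exists_maskNet_eq (t : Fin E) (d : {i : Fin E // i ≠ t} → V) :
    ∃ s : MaskIdx E → V, ∀ i : {i : Fin E // i ≠ t}, maskNet s i = d i := by
  have hpair : ∀ i : {i : Fin E // i ≠ t}, ∃ s : MaskIdx E → V,
      ∀ j : {j : Fin E // j ≠ t}, maskNet s j = Pi.single (M := fun _ => V) i (d i) j := by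
    rintro ⟨i, hi⟩
    rcases hi.lt_or_gt with hit | hti
    · refine ⟨Pi.single ⟨(i, t), hit⟩ (d ⟨i, hi⟩), fun ⟨j, hj⟩ => ?_⟩
      by_cases hij : i = j
      · subst hij; simp [maskNet_single, hi.symm]
      · simp [maskNet_single, hij, Ne.symm hj, Subtype.ext_iff]
    · refine ⟨Pi.single ⟨(t, i), hti⟩ (-d ⟨i, hi⟩), fun ⟨j, hj⟩ => ?_⟩
      by_cases hij : i = j
      · subst hij; simp [maskNet_single, hi.symm]
      · simp [maskNet_single, hij, Ne.symm hj, Subtype.ext_iff]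
  choose σ hσ using hpair
  refine ⟨∑ i, σ i, fun j => ?_⟩
  simp [Finset.sum_apply, hσ, Finset.sum_pi_single]

def revealMap (t : Fin E) :
    (Fin E → V) × (MaskIdx E → V) →+ (V × ({i : Fin E // i ≠ t} → V)) × V :=
  AddMonoidHom.mk' (fun p => ((p.1 t, fun i => p.1 i + maskNet p.2 i), ∑ i, p.1 i)) (by
    intro p p'
    ext
    · rfl
    · simp only [Prod.fst_add, Prod.snd_add, map_add, Pi.add_apply]; abel
    · simp [Finset.sum_add_distrib])

lemma revealMap_surjective (hE : 2 ≤ E) (t : Fin E) :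
    Function.Surjective (revealMap (V := V) t) := by
  rintro ⟨⟨a, b⟩, c⟩
  obtain ⟨u, hut⟩ := Fintype.exists_ne_of_one_lt_card (by simpa using by omega) t
  set g : Fin E → V := Pi.single t a + Pi.single u (c - a)
  obtain ⟨s, hs⟩ := exists_maskNet_eq t (fun i => b i - g i)
  refine ⟨(g, s), ?_⟩
  simp [revealMap, hs, g, hut, Finset.sum_add_distrib]

end Masking

theorem stmt5_general {Ω : Type*} [Fintype Ω] {V : Type*} [AddCommGroup V] [Fintype V] [DecidableEq V]
    {E : ℕ} (hE : 3 ≤ E) (t : Fin E)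
    (μ : Ω → ℝ)
    (g : Fin E → Ω → V) (s : Ω → {q : Fin E × Fin E // q.1 < q.2} → V)
    -- the `g_i` and the masks `s_{ij}` are all mutually independent and uniform on `V`,
    -- i.e. their joint tuple is uniform on the product space:
    (hjoint : ∀ a : (Fin E → V) × ({q : Fin E × Fin E // q.1 < q.2} → V),
      prEq μ (fun ω => ((fun i => g i ω), s ω)) a
        = (1 : ℝ) / (Fintype.card ((Fin E → V) × ({q : Fin E × Fin E // q.1 < q.2} → V)) : ℝ))
    (y : Fin E → Ω → V)
    (hy : ∀ i ω, y i ω = g i ω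
        + ∑ q ∈ Finset.univ.filter (fun q : {q : Fin E × Fin E // q.1 < q.2} => q.1.1 = i), s ω q
        - ∑ q ∈ Finset.univ.filter (fun q : {q : Fin E × Fin E // q.1 < q.2} => q.1.2 = i), s ω q) :
    condMutInfo μ (g t) (fun ω => fun i : {i : Fin E // i ≠ t} => y i ω)
      (fun ω => ∑ i, g i ω) = 0 := by
  have hrevealed : (fun ω => ((g t ω, fun i : {i : Fin E // i ≠ t} => y i ω), ∑ i, g i ω))
      = fun ω => revealMap t ((fun i => g i ω), s ω) := by
    funext ω
    simp [revealMap, maskNet, hy, add_sub_assoc]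
  apply condMutInfo_eq_zero_of_isUniformRV
  rw [hrevealed]
  exact IsUniformRV.comp_addMonoidHom hjoint _ (revealMap_surjective (by omega) t)

/-- client-side privacy of pairwise masking: with `g_1,...,g_E` independent
uniform on `V = F^p` and independent uniform pairwise masks `s_{ij}` (`i < j`), letting
`y i = g i + ∑_{j>i} s_{ij} - ∑_{j<i} s_{ji}`, for `E ≥ 3` and any client `t` the masked
values `(y_i)_{i ≠ t}` reveal nothing about `g_t` beyond `∑ i, g i`:
`I(g_t ; (y_i)_{i≠t} | ∑ i, g i) = 0`. -/
theorem stmt5 {Ω : Type*} [Fintype Ω] {V : Type*} [AddCommGroup V] [Fintype V] [DecidableEq V]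
    {E : ℕ} (hE : 3 ≤ E) (t : Fin E)
    (μ : Ω → ℝ) (hμ : IsPMF μ)
    (g : Fin E → Ω → V) (s : Ω → {q : Fin E × Fin E // q.1 < q.2} → V)
    -- the `g_i` and the masks `s_{ij}` are all mutually independent and uniform on `V`,
    -- i.e. their joint tuple is uniform on the product space:
    (hjoint : ∀ a : (Fin E → V) × ({q : Fin E × Fin E // q.1 < q.2} → V),
      prEq μ (fun ω => ((fun i => g i ω), s ω)) a
        = (1 : ℝ) / (Fintype.card ((Fin E → V) × ({q : Fin E × Fin E // q.1 < q.2} → V)) : ℝ))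
    (y : Fin E → Ω → V)
    (hy : ∀ i ω, y i ω = g i ω
        + ∑ q ∈ Finset.univ.filter (fun q : {q : Fin E × Fin E // q.1 < q.2} => q.1.1 = i), s ω q
        - ∑ q ∈ Finset.univ.filter (fun q : {q : Fin E × Fin E // q.1 < q.2} => q.1.2 = i), s ω q) :
    condMutInfo μ (g t) (fun ω => fun i : {i : Fin E // i ≠ t} => y i ω)
      (fun ω => ∑ i, g i ω) = 0 :=
  stmt5_general hE t μ g s hjoint y hy
end

section
/- Let F be a finite field, β_1,...,β_{k+T}, α distinct elements of F with α ∉ {β_1,...,β_{k+T}}. For data y_1,...,y_k ∈ F^m and independent uniform random Z_1,...,Z_T ∈ F^m, define the Lagrange polynomial u with u(β_r) = y_r for r ≤ k and u(β_{k+r}) = Z_r for r ≤ T. Then for any T distinct evaluation points α_{l_1},...,α_{l_T} disjoint from the β's, the vector (u(α_{l_1}),...,u(α_{l_T})) is uniformly distributed on (F^m)^T and independent of (y_1,...,y_k). Hence I(y_1,...,y_k ; u(α_{l_1}),...,u(α_{l_T})) = 0. -/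
/-!
For fixed data `a`, the evaluations are `z ↦ A a + M z` with `M` the noise part of the Lagrange
basis at the points `αl`. `M` is injective: if `M c = 0`, the interpolant taking the values `0` at
the data nodes and `c` at the noise nodes has `k + T` zeros (the data nodes and the `αl`) but
degree `< k + T`, so it vanishes and `c = 0`. Hence the evaluations are a bijective image of the
noise depending only on the data, i.e. a one-time pad: uniform noise independent of the data makes
them uniform and independent of the data, and independence gives zero mutual information.
-/

open Finset

/-- The Lagrange basis polynomial at node `r`, evaluated at `x`. -/
noncomputable def lagBasis {F : Type*} [Field F] {N : ℕ} (β : Fin N → F) (r : Fin N) (x : F) : F :=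
  ∏ l ∈ Finset.univ.erase r, (x - β l) / (β r - β l)

open Polynomial

section LagrangeCoding

variable {F : Type*} [Field F] {k T : ℕ} {β : Fin (k + T) → F} {αl : Fin T → F}

lemma eval_interpolate_univ_eq_sum_lagBasis {N : ℕ} (β : Fin N → F) (r : Fin N → F) (x : F) :
    (Lagrange.interpolate univ β r).eval x = ∑ i, r i * lagBasis β i x := by
  simp only [Lagrange.interpolate_apply, eval_finsetSum, eval_mul, eval_C, Lagrange.basis,
    eval_prod, Lagrange.basisDivisor, lagBasis]
  refine sum_congr rfl fun i _ => congrArg _ (prod_congr rfl fun l _ => ?_)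
  simp [div_eq_mul_inv, mul_comm]

theorem eq_zero_of_sum_lagBasis_noise_eq_zero (hβ : Function.Injective β)
    (hα : Function.Injective αl) (hdisj : ∀ j r, αl j ≠ β r) (c : Fin T → F)
    (hc : ∀ j, ∑ r, c r * lagBasis β (Fin.natAdd k r) (αl j) = 0) : c = 0 := by
  set p := Lagrange.interpolate univ β (Fin.append 0 c)
  have hβ' : Set.InjOn β (univ : Finset (Fin (k + T))) := hβ.injOn
  have hp_eval (x : F) : p.eval x = ∑ r, c r * lagBasis β (Fin.natAdd k r) x := by
    rw [eval_interpolate_univ_eq_sum_lagBasis, Fin.sum_univ_add]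
    simp
  have hzeros : Function.Injective (Sum.elim (β ∘ Fin.castAdd T) αl) := by
    rintro (a | a) (b | b) h
    · exact congrArg Sum.inl (Fin.castAdd_injective _ _ (hβ h))
    · exact absurd h.symm (hdisj b _)
    · exact absurd h (hdisj a _)
    · exact congrArg Sum.inr (hα h)
  have hp : p = 0 := by
    refine eq_zero_of_degree_lt_of_eval_index_eq_zero univ hzeros.injOn ?_ ?_
    · convert Lagrange.degree_interpolate_lt (Fin.append 0 c) hβ' using 2
      simp
    · rintro (s | j) -
      · exact (Lagrange.eval_interpolate_at_node _ hβ' (mem_univ (Fin.castAdd T s))).trans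
          (Fin.append_left _ _ s)
      · exact (hp_eval _).trans (hc j)
  funext r
  have hnode : p.eval (β (Fin.natAdd k r)) = c r :=
    (Lagrange.eval_interpolate_at_node _ hβ' (mem_univ _)).trans (Fin.append_right _ _ r)
  rwa [hp, eval_zero, eq_comm] at hnode

theorem injective_sum_lagBasis_noise_smul {ι : Type*} (hβ : Function.Injective β)
    (hα : Function.Injective αl) (hdisj : ∀ j r, αl j ≠ β r) :
    Function.Injective fun (z : Fin T → ι → F) j =>
      ∑ r, lagBasis β (Fin.natAdd k r) (αl j) • z r := by
  intro z z' h
  funext r i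
  have hcoord := congrFun (eq_zero_of_sum_lagBasis_noise_eq_zero hβ hα hdisj
    (fun r => z r i - z' r i) fun j => ?_) r
  · simpa [sub_eq_zero] using hcoord
  simpa [mul_sub, sum_sub_distrib, mul_comm, sub_eq_zero] using congrFun (congrFun h j) i

theorem bijective_lagrange_encode {ι : Type*} [Finite ι] [Finite F] (hβ : Function.Injective β)
    (hα : Function.Injective αl) (hdisj : ∀ j r, αl j ≠ β r) (a : Fin k → ι → F) :
    Function.Bijective fun (z : Fin T → ι → F) j =>
      (∑ r, lagBasis β (Fin.castAdd T r) (αl j) • a r)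
        + ∑ r, lagBasis β (Fin.natAdd k r) (αl j) • z r := by
  refine Finite.injective_iff_bijective.mp fun z z' h => ?_
  refine injective_sum_lagBasis_noise_smul hβ hα hdisj (funext fun j => ?_)
  exact add_left_cancel (congrFun h j)

end LagrangeCoding

section FiniteProbability

variable {Ω α γ : Type*} [Fintype Ω] (μ : Ω → ℝ)

lemma sum_prEq [Fintype α] [DecidableEq α] (X : Ω → α) : ∑ a, prEq μ X a = ∑ ω, μ ω := by
  unfold prEq
  rw [sum_comm]
  simp

lemma prEq_eq_sum_prEq_pair [Fintype α] [DecidableEq α] [DecidableEq γ] (X : Ω → α)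
    (Y : Ω → γ) (b : γ) : prEq μ Y b = ∑ a, prEq μ (fun ω => (X ω, Y ω)) (a, b) := by
  unfold prEq
  rw [sum_comm]
  simp [Prod.ext_iff, ite_and]

lemma entro_pair_of_indepRV [Fintype α] [DecidableEq α] [Fintype γ] [DecidableEq γ]
    (X : Ω → α) (Y : Ω → γ) (hμ : ∑ ω, μ ω = 1) (h : IndepRV μ X Y) :
    entro μ (fun ω => (X ω, Y ω)) = entro μ X + entro μ Y := by
  have hX : ∑ a, prEq μ X a = 1 := by rw [sum_prEq, hμ]
  have hY : ∑ b, prEq μ Y b = 1 := by rw [sum_prEq, hμ]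
  unfold IndepRV at h
  unfold entro
  rw [Fintype.sum_prod_type]
  simp_rw [h, Real.negMulLog_mul, sum_add_distrib, ← sum_mul, ← mul_sum]
  rw [hY, ← sum_mul, hX]
  ring

lemma mutInfo_eq_zero_of_indepRV [Fintype α] [DecidableEq α] [Fintype γ] [DecidableEq γ]
    (X : Ω → α) (Y : Ω → γ) (hμ : ∑ ω, μ ω = 1) (h : IndepRV μ X Y) : mutInfo μ X Y = 0 := by
  rw [mutInfo, entro_pair_of_indepRV μ X Y hμ h]
  ring

lemma prEq_pair_eq_mul_of_bijective_mask {δ : Type*} [DecidableEq α] [DecidableEq γ] [DecidableEq δ]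
    (X : Ω → α) (Z : Ω → γ) (V : Ω → δ) (g : α → γ → δ) (hg : ∀ a, Function.Bijective (g a))
    (hV : ∀ ω, V ω = g (X ω) (Z ω)) (q : ℝ) (hZ : ∀ c, prEq μ Z c = q) (hXZ : IndepRV μ X Z)
    (a : α) (b : δ) : prEq μ (fun ω => (X ω, V ω)) (a, b) = prEq μ X a * q := by
  obtain ⟨c, rfl⟩ := (hg a).surjective b
  have hevent (ω : Ω) : (X ω, V ω) = (a, g a c) ↔ (X ω, Z ω) = (a, c) := by
    simp only [Prod.mk.injEq, hV]
    constructor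
    · rintro ⟨rfl, h⟩
      exact ⟨rfl, (hg _).injective h⟩
    · rintro ⟨rfl, rfl⟩
      exact ⟨rfl, rfl⟩
  calc prEq μ (fun ω => (X ω, V ω)) (a, g a c)
      = prEq μ (fun ω => (X ω, Z ω)) (a, c) :=
        sum_congr rfl fun ω _ => if_congr (hevent ω) rfl rfl
    _ = prEq μ X a * q := by rw [hXZ, hZ]

lemma prEq_eq_of_prEq_pair_eq_mul [Fintype α] [DecidableEq α] [DecidableEq γ] (X : Ω → α)
    (Y : Ω → γ) (hμ : ∑ ω, μ ω = 1) (q : ℝ)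
    (h : ∀ a b, prEq μ (fun ω => (X ω, Y ω)) (a, b) = prEq μ X a * q) (b : γ) :
    prEq μ Y b = q := by
  simp_rw [prEq_eq_sum_prEq_pair μ X Y b, h, ← sum_mul, sum_prEq, hμ, one_mul]

end FiniteProbability

/-- security of Lagrange coding with `T` uniform noise shards: the `T`
evaluations of the Lagrange interpolant at fresh points `α_{l_1},...,α_{l_T}` are jointly
uniform on `(F^m)^T` and independent of the data `(y_1,...,y_k)`; hence the mutual
information between the data and these evaluations is zero. -/
theorem stmt6 {Ω : Type*} [Fintype Ω] {F : Type*} [Field F] [Fintype F] [DecidableEq F]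
    {k T m : ℕ}
    (β : Fin (k + T) → F) (hβ : Function.Injective β)
    (αl : Fin T → F) (hα : Function.Injective αl)
    (hdisj : ∀ j r, αl j ≠ β r)
    (μ : Ω → ℝ) (hμ : IsPMF μ)
    (Yv : Ω → Fin k → (Fin m → F)) (Zv : Ω → Fin T → (Fin m → F))
    (hZunif : ∀ b : Fin T → (Fin m → F),
      prEq μ Zv b = (1 : ℝ) / (Fintype.card (Fin T → Fin m → F) : ℝ))
    (hindep : IndepRV μ Yv Zv)
    (U : Ω → Fin T → (Fin m → F))
    (hU : ∀ ω j, U ω j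
        = (∑ r : Fin k, lagBasis β (Fin.castAdd T r) (αl j) • Yv ω r)
        + ∑ r : Fin T, lagBasis β (Fin.natAdd k r) (αl j) • Zv ω r) :
    (∀ b : Fin T → (Fin m → F),
        prEq μ U b = (1 : ℝ) / (Fintype.card (Fin T → Fin m → F) : ℝ))
    ∧ IndepRV μ Yv U
    ∧ mutInfo μ Yv U = 0 := by
  have hjoint := prEq_pair_eq_mul_of_bijective_mask μ Yv Zv U _
    (bijective_lagrange_encode hβ hα hdisj) (fun ω => funext (hU ω)) _ hZunif hindep
  have hunif := prEq_eq_of_prEq_pair_eq_mul μ Yv U hμ.2 _ hjoint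
  have hUindep : IndepRV μ Yv U := fun a b => by rw [hjoint, hunif]
  exact ⟨hunif, hUindep, mutInfo_eq_zero_of_indepRV μ Yv U hμ.2 hUindep⟩
end
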